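/- arXiv:1703.10636 — 3 statements merged into one kernel-verified Lean document; each statement's English description precedes it below -/
import Mathlib

section
/- Let C be a cartesian category. If f : X ⟶ Y is an effective descent morphism and g : Z ⟶ Y is any morphism of C, then the pullback of f along g, i.e., the projection π : Z ×_Y X ⟶ Z, is an effective descent morphism. -/
/-!
Write `P = Z ×_Y X` with projections `p : P ⟶ Z` and `q : P ⟶ X`. Pasting pullbacks gives
the Beck–Chevalley isomorphism `p* ⋙ Σ_q ≅ Σ_g ⋙ f*` of functors `C/Z ⥤ C/X`. Since `Σ_g` is
conservative and creates colimits (it is the forgetful functor of the iterated slice `(C/Y)/g`)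
and `Σ_q` reflects them, the hypotheses of Beck's monadicity theorem for `p*` (conservativity,
existence and preservation of coequalizers of `p*`-split pairs) are inherited from those of the
monadic functor `f*` through this square.
-/

open CategoryTheory Limits

universe v₁ v₂ v₃ u₁ u₂ u₃

/-- A morphism `f : X ⟶ Y` of a cartesian category is an effective descent morphism if the
pullback functor `f* : C/Y ⥤ C/X` is monadic. -/
def EffectiveDescentMorphism {C : Type u₁} [Category.{v₁} C] [HasFiniteLimits C]
    {X Y : C} (f : X ⟶ Y) : Prop :=
  Nonempty (MonadicRightAdjoint (Over.pullback f))

universe w w' u₄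

namespace CategoryTheory

open CategoryTheory.Monad

lemma Functor.reflectsIsomorphisms_of_monadicRightAdjoint {C : Type u₁} {D : Type u₂}
    [Category.{v₁} C] [Category.{v₁} D] (R : D ⥤ C) [MonadicRightAdjoint R] :
    R.ReflectsIsomorphisms :=
  reflectsIsomorphisms_of_iso (comparisonForget (monadicAdjunction R))

lemma hasSplitCoequalizer_map_of_iso {C : Type u₁} {D : Type u₂} [Category.{v₁} C]
    [Category.{v₂} D] {F G : C ⥤ D} (e : F ≅ G) {A B : C} (u v : A ⟶ B)
    [h : HasSplitCoequalizer (F.map u) (F.map v)] :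
    HasSplitCoequalizer (G.map u) (G.map v) := by
  obtain ⟨W, π, ⟨t⟩⟩ := h.splittable
  refine ⟨⟨W, e.inv.app B ≫ π, ⟨{
    rightSection := t.rightSection ≫ e.hom.app B
    leftSection := e.inv.app B ≫ t.leftSection ≫ e.hom.app A
    condition := ?_
    rightSection_π := ?_
    leftSection_bottom := ?_
    leftSection_top := ?_ }⟩⟩⟩
  · rw [e.inv.naturality_assoc, e.inv.naturality_assoc, t.condition]
  · simp
  · simp only [Category.assoc, ← e.hom.naturality, t.leftSection_bottom_assoc,
      Iso.inv_hom_id_app]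
  · simp only [Category.assoc, ← e.hom.naturality, t.leftSection_top_assoc]

instance hasColimit_parallelPair_comp {C : Type u₁} {D : Type u₂} [Category.{v₁} C]
    [Category.{v₂} D] (F : C ⥤ D) {A B : C} (a b : A ⟶ B) [HasCoequalizer (F.map a) (F.map b)] :
    HasColimit (parallelPair a b ⋙ F) :=
  hasColimit_of_iso (F := parallelPair (F.map a) (F.map b)) (diagramIsoParallelPair _)

section

variable {C : Type u₁} {D : Type u₂} [Category.{v₁} C] [Category.{v₁} D]

lemma hasCoequalizer_of_isSplitPair (R : D ⥤ C) [MonadicRightAdjoint R] {A B : D}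
    (a b : A ⟶ B) [R.IsSplitPair a b] : HasCoequalizer a b :=
  have := createsGSplitCoequalizersOfMonadic R a b
  hasColimit_of_created _ R

lemma preservesColimit_of_isSplitPair (R : D ⥤ C) [MonadicRightAdjoint R] {A B : D}
    (a b : A ⟶ B) [R.IsSplitPair a b] : PreservesColimit (parallelPair a b) R :=
  have := createsGSplitCoequalizersOfMonadic R a b
  preservesColimit_of_createsColimit_and_hasColimit _ R

variable {C' : Type u₃} {D' : Type u₄} [Category.{v₂} C'] [Category.{v₂} D']
  {R : D ⥤ C} {R' : D' ⥤ C'} {L : D' ⥤ D} {L' : C' ⥤ C}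

lemma isSplitPair_map_of_iso (e : R' ⋙ L' ≅ L ⋙ R) {A B : D'} (u v : A ⟶ B)
    [R'.IsSplitPair u v] : R.IsSplitPair (L.map u) (L.map v) :=
  have : HasSplitCoequalizer ((R' ⋙ L').map u) ((R' ⋙ L').map v) :=
    inferInstanceAs (HasSplitCoequalizer (L'.map (R'.map u)) (L'.map (R'.map v)))
  hasSplitCoequalizer_map_of_iso e u v

lemma reflectsIsomorphisms_of_iso_comp (e : R' ⋙ L' ≅ L ⋙ R) [MonadicRightAdjoint R]
    [L.ReflectsIsomorphisms] : R'.ReflectsIsomorphisms :=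
  have := R.reflectsIsomorphisms_of_monadicRightAdjoint
  have := reflectsIsomorphisms_of_iso e.symm
  reflectsIsomorphisms_of_comp R' L'

lemma hasCoequalizerOfIsSplitPair_of_iso_comp (e : R' ⋙ L' ≅ L ⋙ R) [MonadicRightAdjoint R]
    [CreatesColimitsOfShape WalkingParallelPair L] : HasCoequalizerOfIsSplitPair R' where
  out u v _ :=
    have := isSplitPair_map_of_iso e u v
    have := hasCoequalizer_of_isSplitPair R (L.map u) (L.map v)
    hasColimit_of_created _ L

lemma preservesColimitOfIsSplitPair_of_iso_comp (e : R' ⋙ L' ≅ L ⋙ R) [MonadicRightAdjoint R]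
    [CreatesColimitsOfShape WalkingParallelPair L]
    [ReflectsColimitsOfShape WalkingParallelPair L'] : PreservesColimitOfIsSplitPair R' where
  out u v _ :=
    have := isSplitPair_map_of_iso e u v
    have := hasCoequalizer_of_isSplitPair R (L.map u) (L.map v)
    have := preservesColimit_of_isSplitPair R (L.map u) (L.map v)
    have : PreservesColimit (parallelPair u v) L :=
      preservesColimit_of_createsColimit_and_hasColimit _ L
    have : PreservesColimit (parallelPair u v ⋙ L) R :=
      preservesColimit_of_iso_diagram (K₁ := parallelPair (L.map u) (L.map v)) _
        (diagramIsoParallelPair (parallelPair u v ⋙ L)).symm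
    have := preservesColimit_of_natIso (parallelPair u v) e.symm
    preservesColimit_of_reflects_of_preserves R' L'

theorem nonempty_monadicRightAdjoint_of_iso_comp (e : R' ⋙ L' ≅ L ⋙ R)
    [MonadicRightAdjoint R] [R'.IsRightAdjoint] [L.ReflectsIsomorphisms]
    [CreatesColimitsOfShape WalkingParallelPair L]
    [ReflectsColimitsOfShape WalkingParallelPair L'] : Nonempty (MonadicRightAdjoint R') :=
  have := reflectsIsomorphisms_of_iso_comp e
  have := hasCoequalizerOfIsSplitPair_of_iso_comp e
  have := preservesColimitOfIsSplitPair_of_iso_comp e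
  ⟨monadicOfHasPreservesGSplitCoequalizersOfReflectsIsomorphisms
    (Adjunction.ofIsRightAdjoint R')⟩

end

namespace Over

variable {C : Type u₁} [Category.{v₁} C]

noncomputable instance createsColimitsOfSize_map {X Y : C} (f : X ⟶ Y) :
    CreatesColimitsOfSize.{w, w'} (map f) :=
  have : (mk f).iteratedSliceBackward.IsEquivalence :=
    (iteratedSliceEquiv (mk f)).isEquivalence_inverse
  createsColimitsOfNatIso (eqToIso (iteratedSliceBackward_forget (mk f)))

instance reflectsIsomorphisms_map {X Y : C} (f : X ⟶ Y) : (map f).ReflectsIsomorphisms :=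
  have : (map f ⋙ forget Y).ReflectsIsomorphisms :=
    inferInstanceAs (forget X).ReflectsIsomorphisms
  reflectsIsomorphisms_of_comp _ (forget Y)

noncomputable def pullbackFstCompMapSndIso [HasPullbacks C] {X Y Z : C} (f : X ⟶ Y)
    (g : Z ⟶ Y) :
    pullback (pullback.fst g f) ⋙ map (pullback.snd g f) ≅ map g ⋙ pullback f :=
  NatIso.ofComponents (fun A => isoMk (pullbackRightPullbackFstIso g f A.hom) (by simp))
    (fun u => by
      ext
      apply pullback.hom_ext <;>
        simp only [Functor.comp_obj, map_obj_left, pullback_obj_left, map_obj_hom,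
          Functor.comp_map, comp_left, map_map_left, pullback_map_left, isoMk_hom_left,
          Category.assoc, pullbackRightPullbackFstIso_hom_fst, pullbackRightPullbackFstIso_hom_snd]
      · erw [pullback.lift_fst, pullback.lift_fst]
        simp
      · erw [pullback.lift_snd_assoc, pullback.lift_snd]
        simp)

end Over

end CategoryTheory

/-- Effective descent morphisms are stable under pullback: if `f : X ⟶ Y` is an effective
descent morphism and `g : Z ⟶ Y` is any morphism, then the projection
`π : Z ×_Y X ⟶ Z` is an effective descent morphism. -/
theorem effectiveDescentMorphism_pullback
    {C : Type u₁} [Category.{v₁} C] [HasFiniteLimits C]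
    {X Y Z : C} (f : X ⟶ Y) (g : Z ⟶ Y)
    (hf : EffectiveDescentMorphism f) :
    EffectiveDescentMorphism (pullback.fst g f) :=
  let ⟨_⟩ := hf
  nonempty_monadicRightAdjoint_of_iso_comp (Over.pullbackFstCompMapSndIso f g)
end

section
/- Let C be a cartesian category and let g : X ⟶ Y and f : Y ⟶ Z be composable morphisms of C. If both the composite f ∘ g and g are effective descent morphisms, then f is an effective descent morphism. -/
/-!
Pullback along `g ≫ f` is isomorphic to `f*` followed by `g*`, monadicity is invariant under
natural isomorphism, and `f*` has the left adjoint `Σ_f`. So by Beck's theorem it suffices to see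
that `G₁` is monadic whenever it has a left adjoint and both `G₁ ⋙ G₂` and `G₂` are monadic.
`G₁` reflects isomorphisms because `G₁ ⋙ G₂` does. A `G₁`-split pair is `(G₁ ⋙ G₂)`-split, so it
has a coequalizer, preserved by `G₁ ⋙ G₂`; since its image under `G₁` is `G₂`-split, `G₂` reflects
that coequalizer, hence `G₁` preserves it.
-/

open CategoryTheory Limits

universe v₁ v₂ v₃ u₁ u₂ u₃

namespace CategoryTheory

section SplitPairs

variable {A : Type u₁} {B : Type u₂} {E : Type u₃}
variable [Category.{v₁} A] [Category.{v₂} B] [Category.{v₃} E]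

def IsSplitCoequalizer.ofIsos {X₁ Y₁ X₂ Y₂ Z : E} {f g : X₁ ⟶ Y₁} {π : Y₁ ⟶ Z}
    (q : IsSplitCoequalizer f g π) (i : X₁ ≅ X₂) (j : Y₁ ≅ Y₂) :
    IsSplitCoequalizer (i.inv ≫ f ≫ j.hom) (i.inv ≫ g ≫ j.hom) (j.inv ≫ π) where
  rightSection := q.rightSection ≫ j.hom
  leftSection := j.inv ≫ q.leftSection ≫ i.hom
  condition := by simp [q.condition]
  leftSection_top := by simp [q.leftSection_top_assoc]

variable {X Y : A} (f g : X ⟶ Y)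

lemma Functor.isSplitPair_of_iso {K H : A ⥤ E} (ι : K ≅ H) [K.IsSplitPair f g] :
    H.IsSplitPair f g := by
  obtain ⟨Z, π, ⟨q⟩⟩ := HasSplitCoequalizer.splittable (f := K.map f) (g := K.map g)
  have conj {U V : A} (h : U ⟶ V) : H.map h = (ι.app U).inv ≫ K.map h ≫ (ι.app V).hom := by simp
  rw [Functor.IsSplitPair, conj f, conj g]
  exact ⟨Z, (ι.app Y).inv ≫ π, ⟨q.ofIsos (ι.app X) (ι.app Y)⟩⟩

lemma Functor.isSplitPair_comp (G : A ⥤ B) (G' : B ⥤ E) [G.IsSplitPair f g] :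
    (G ⋙ G').IsSplitPair f g :=
  inferInstanceAs <| HasSplitCoequalizer (G'.map (G.map f)) (G'.map (G.map g))

lemma hasColimit_parallelPair_comp_of_isSplitPair (G : A ⥤ E) [G.IsSplitPair f g] :
    HasColimit (parallelPair f g ⋙ G) := by
  rw [hasColimit_iff_of_iso (diagramIsoParallelPair _)]
  exact inferInstanceAs <| HasCoequalizer (G.map f) (G.map g)

end SplitPairs

lemma reflectsIsomorphisms_of_monadic {A : Type u₁} {E : Type u₃} [Category.{v₁} A]
    [Category.{v₃} E] (R : A ⥤ E) [MonadicRightAdjoint R] : R.ReflectsIsomorphisms :=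
  reflectsIsomorphisms_of_iso (Monad.comparisonForget (monadicAdjunction R))

namespace Monad

variable {A : Type u₁} {B : Type u₂} {E : Type u₃}
variable [Category.{v₁} A] [Category.{v₁} B] [Category.{v₁} E]

section SplitPairs

variable {X Y : A} (f g : X ⟶ Y)

lemma hasCoequalizer_of_isSplitPair_of_monadic (G : A ⥤ E) [MonadicRightAdjoint G]
    [G.IsSplitPair f g] : HasCoequalizer f g :=
  have := createsGSplitCoequalizersOfMonadic G f g
  have := hasColimit_parallelPair_comp_of_isSplitPair f g G
  hasColimit_of_created (parallelPair f g) G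

lemma preservesColimit_of_isSplitPair_of_monadic (G : A ⥤ E) [MonadicRightAdjoint G]
    [G.IsSplitPair f g] : PreservesColimit (parallelPair f g) G :=
  have := createsGSplitCoequalizersOfMonadic G f g
  have := hasColimit_parallelPair_comp_of_isSplitPair f g G
  preservesColimit_of_createsColimit_and_hasColimit _ _

end SplitPairs

@[reducible]
noncomputable def monadicOfNatIso {R R' : A ⥤ E} (ι : R ≅ R') [MonadicRightAdjoint R] :
    MonadicRightAdjoint R' :=
  have : CreatesColimitOfIsSplitPair R' := ⟨fun f g _ =>
    have := Functor.isSplitPair_of_iso f g ι.symm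
    have := createsGSplitCoequalizersOfMonadic R f g
    createsColimitOfNatIso ι⟩
  monadicOfCreatesGSplitCoequalizers ((monadicAdjunction R).ofNatIsoRight ι)

@[reducible]
noncomputable def monadicOfComp {G₁ : A ⥤ B} {G₂ : B ⥤ E} {F : B ⥤ A} (adj : F ⊣ G₁)
    [MonadicRightAdjoint (G₁ ⋙ G₂)] [MonadicRightAdjoint G₂] : MonadicRightAdjoint G₁ :=
  have := reflectsIsomorphisms_of_monadic (G₁ ⋙ G₂)
  have := reflectsIsomorphisms_of_comp G₁ G₂
  have : HasCoequalizerOfIsSplitPair G₁ := ⟨fun f g _ =>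
    have := Functor.isSplitPair_comp f g G₁ G₂
    hasCoequalizer_of_isSplitPair_of_monadic f g (G₁ ⋙ G₂)⟩
  have : PreservesColimitOfIsSplitPair G₁ := ⟨fun f g _ =>
    have := Functor.isSplitPair_comp f g G₁ G₂
    have := preservesColimit_of_isSplitPair_of_monadic f g (G₁ ⋙ G₂)
    have := createsGSplitCoequalizersOfMonadic G₂ (G₁.map f) (G₁.map g)
    have : ReflectsColimit (parallelPair f g ⋙ G₁) G₂ :=
      reflectsColimit_of_iso_diagram (K₁ := parallelPair (G₁.map f) (G₁.map g)) G₂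
        (diagramIsoParallelPair (parallelPair f g ⋙ G₁)).symm
    preservesColimit_of_reflects_of_preserves G₁ G₂⟩
  monadicOfHasPreservesGSplitCoequalizersOfReflectsIsomorphisms adj

end Monad

end CategoryTheory

/-- If `f ∘ g` and `g` are effective descent morphisms then so is `f`. -/
theorem effectiveDescentMorphism_of_comp
    {C : Type u₁} [Category.{v₁} C] [HasFiniteLimits C]
    {X Y Z : C} (g : X ⟶ Y) (f : Y ⟶ Z)
    (hgf : EffectiveDescentMorphism (g ≫ f)) (hg : EffectiveDescentMorphism g) :
    EffectiveDescentMorphism f := by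
  obtain ⟨_⟩ := hgf
  obtain ⟨_⟩ := hg
  have : MonadicRightAdjoint (Over.pullback f ⋙ Over.pullback g) :=
    Monad.monadicOfNatIso (Over.pullbackComp g f)
  exact ⟨Monad.monadicOfComp (G₂ := Over.pullback g) (Over.mapPullbackAdj f)⟩
end

section
/- Let C be a cartesian category and let g : X ⟶ Y and f : Y ⟶ Z be composable morphisms of C. If g is a split epimorphism and f is an effective descent morphism, then the composite f ∘ g is an effective descent morphism. -/
open CategoryTheory Limits

universe v₁ v₂ v₃ u₁ u₂ u₃

/-!
Pick a section `s` of `g`. Then `(g ≫ f)* ⋙ s* ≅ (s ≫ g ≫ f)* = f*` and `(g ≫ f)* ≅ f* ⋙ g*`.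
The first isomorphism shows that `(g ≫ f)*` reflects isomorphisms and that its split pairs are
`f*`-split, so that `f*` creates their coequalizers. By the second, `(g ≫ f)*` preserves these
coequalizers, because `f*` turns them into split coequalizers, which every functor preserves.
Beck's monadicity theorem concludes.
-/

namespace CategoryTheory

section

variable {C : Type u₂} [Category.{v₂} C] {D : Type u₃} [Category.{v₃} D]

def IsSplitCoequalizer.ofNatIso {H K : C ⥤ D} (α : H ≅ K) {A B : C} {u v : A ⟶ B}
    {W : D} {π : H.obj B ⟶ W} (q : IsSplitCoequalizer (H.map u) (H.map v) π) :
    IsSplitCoequalizer (K.map u) (K.map v) (α.inv.app B ≫ π) where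
  rightSection := q.rightSection ≫ α.hom.app B
  leftSection := α.inv.app B ≫ q.leftSection ≫ α.hom.app A
  condition := by rw [α.inv.naturality_assoc, α.inv.naturality_assoc, q.condition]
  rightSection_π := by rw [Category.assoc, Iso.hom_inv_id_app_assoc, q.rightSection_π]
  leftSection_bottom := by
    rw [Category.assoc, Category.assoc, ← α.hom.naturality, q.leftSection_bottom_assoc,
      Iso.inv_hom_id_app]
  leftSection_top := by
    rw [Category.assoc, Category.assoc, ← α.hom.naturality, q.leftSection_top_assoc,
      Category.assoc]

theorem Functor.IsSplitPair.of_iso {H K : C ⥤ D} (α : H ≅ K) {A B : C} (u v : A ⟶ B)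
    [H.IsSplitPair u v] : K.IsSplitPair u v :=
  ⟨_, _, ⟨(HasSplitCoequalizer.isSplitCoequalizer (H.map u) (H.map v)).ofNatIso α⟩⟩

instance Functor.reflectsIsomorphisms_of_monadicRightAdjoint_s12 (R : D ⥤ C)
    [MonadicRightAdjoint R] : R.ReflectsIsomorphisms :=
  reflectsIsomorphisms_of_iso (Monad.comparisonForget (monadicAdjunction R))

end

variable {A : Type u₁} {B : Type u₂} {B' : Type u₃}
  [Category.{v₁} A] [Category.{v₁} B] [Category.{v₁} B']

theorem Monad.nonempty_monadicRightAdjoint_of_factors {R : A ⥤ B} [R.IsRightAdjoint]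
    (K : A ⥤ B') [MonadicRightAdjoint K] {S : B ⥤ B'} {T : B' ⥤ B}
    (eS : R ⋙ S ≅ K) (eT : K ⋙ T ≅ R) : Nonempty (MonadicRightAdjoint R) := by
  have isSplitPair_K {X Y : A} (u v : X ⟶ Y) [R.IsSplitPair u v] : K.IsSplitPair u v :=
    have : (R ⋙ S).IsSplitPair u v :=
      inferInstanceAs (HasSplitCoequalizer (S.map (R.map u)) (S.map (R.map v)))
    Functor.IsSplitPair.of_iso eS u v
  have : R.ReflectsIsomorphisms :=
    have := reflectsIsomorphisms_of_iso eS.symm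
    reflectsIsomorphisms_of_comp R S
  have : HasCoequalizerOfIsSplitPair R := ⟨fun u v _ => by
    have := isSplitPair_K u v
    have := createsGSplitCoequalizersOfMonadic K u v
    let e : parallelPair u v ⋙ K ≅ parallelPair (K.map u) (K.map v) := diagramIsoParallelPair _
    have := hasColimit_of_iso e
    exact hasColimit_of_created (parallelPair u v) K⟩
  have : PreservesColimitOfIsSplitPair R := ⟨fun u v _ => by
    have := isSplitPair_K u v
    have := createsGSplitCoequalizersOfMonadic K u v
    let e : parallelPair u v ⋙ K ≅ parallelPair (K.map u) (K.map v) := diagramIsoParallelPair _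
    have := hasColimit_of_iso e
    have := preservesColimit_of_iso_diagram T e.symm
    exact preservesColimit_of_natIso _ eT⟩
  exact ⟨monadicOfHasPreservesGSplitCoequalizersOfReflectsIsomorphisms
    (Adjunction.ofIsRightAdjoint R)⟩

end CategoryTheory


/-- If `g` is a split epimorphism and `f` is an effective descent morphism then the composite
`f ∘ g` is an effective descent morphism. -/
theorem effectiveDescentMorphism_comp_of_isSplitEpi
    {C : Type u₁} [Category.{v₁} C] [HasFiniteLimits C]
    {X Y Z : C} (g : X ⟶ Y) (f : Y ⟶ Z)
    (hg : IsSplitEpi g) (hf : EffectiveDescentMorphism f) :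
    EffectiveDescentMorphism (g ≫ f) := by
  obtain ⟨_⟩ := hf
  obtain ⟨⟨s, hs⟩⟩ := hg
  exact Monad.nonempty_monadicRightAdjoint_of_factors (Over.pullback f)
    ((Over.pullbackComp s (g ≫ f)).symm ≪≫ eqToIso (by simp [reassoc_of% hs]))
    (Over.pullbackComp g f).symm
end
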